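/- Let p ≥ 1, γ > p − 1, and δ ≥ 0. Suppose Γ : {(s,t) : 0 ≤ s ≤ t ≤ T} → U takes values in a Banach space U, ω is a continuous superadditive control with ω(s,t) ≤ 1, and suppose: (i) for all s ≤ u ≤ t, ‖Γ_{s,t}‖ ≤ (1 + C ω(s,t)^{1/p})(‖Γ_{s,u}‖ + ‖Γ_{u,t}‖) + C ω(s,t)^{(γ+1)/p}; (ii) along a nested sequence of dyadic-type partitions {t_j^n} of [s,t] with ω(t_j^n, t_{j+1}^n) ≤ 2^{−n} ω(s,t), one has Σ_j ‖Γ_{t_j^n, t_{j+1}^n}‖ → 0 as n → ∞. Then there is a constant C' depending only on p, γ, C such that ‖Γ_{s,t}‖ ≤ C' ω(s,t)^{(γ+1)/p}. -/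

import Mathlib

open Filter Finset Real Topology

/-!
Bisect `[s, t]` repeatedly at points `u` with `ω(a, u) = ω(u, b)`; they exist by the intermediate
value theorem, and superadditivity makes each half carry at most `ω(a, b) / 2`. Generation `n`
of this dyadic partition thus consists of intervals with control at most `2⁻ⁿ ω(s, t)`. If `Sₙ`
is the sum of `‖Γ‖` over generation `n`, applying (i) to each interval of generation `n` at its
bisection point gives
`Sₙ ≤ (1 + C 2^{-n/p}) Sₙ₊₁ + C 2^{-nθ} ω(s, t)^{(γ+1)/p}` with `θ = (γ + 1)/p - 1 > 0`.
Unwinding this recursion and letting `n → ∞` with (ii) bounds `S₀ = ‖Γ_{s,t}‖` by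
`∏ₖ (1 + C 2^{-k/p}) · ∑ₖ C 2^{-kθ} · ω(s, t)^{(γ+1)/p}`, and both factors are finite.
-/

theorem Finset.sum_range_two_mul {M : Type*} [AddCommMonoid M] (f : ℕ → M) (n : ℕ) :
    ∑ j ∈ range (2 * n), f j = ∑ i ∈ range n, (f (2 * i) + f (2 * i + 1)) := by
  induction n with
  | zero => simp
  | succ n ih =>
    rw [show 2 * (n + 1) = 2 * n + 1 + 1 by ring, sum_range_succ, sum_range_succ, ih,
      sum_range_succ, add_assoc]

theorem monotoneOn_Iic_of_le_succ {α : Type*} [Preorder α] {f : ℕ → α} {m : ℕ}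
    (hf : ∀ j < m, f j ≤ f (j + 1)) : MonotoneOn f (Set.Iic m) :=
  monotoneOn_of_le_succ Set.ordConnected_Iic fun j _ _ hj ↦ hf j (Order.succ_le_iff.1 hj)

theorem discrete_gronwall_backward {S a b : ℕ → ℝ} (ha : ∀ n, 0 ≤ a n) (hb : ∀ n, 0 ≤ b n)
    (ha' : Summable a) (hb' : Summable b) (hS : ∀ n, S n ≤ (1 + a n) * S (n + 1) + b n)
    (hlim : Tendsto S atTop (𝓝 0)) : S 0 ≤ exp (∑' n, a n) * ∑' n, b n := by
  set P : ℕ → ℝ := fun N ↦ ∏ k ∈ range N, (1 + a k)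
  have hP0 : ∀ N, 0 ≤ P N := fun N ↦ prod_nonneg fun k _ ↦ by linarith [ha k]
  have hPle : ∀ N, P N ≤ exp (∑' n, a n) := fun N ↦
    (prod_one_add_le_exp_sum _ ha).trans (exp_le_exp.2 (ha'.sum_le_tsum _ fun k _ ↦ ha k))
  have hunwind : ∀ N, S 0 ≤ P N * S N + ∑ n ∈ range N, P n * b n := by
    intro N
    induction N with
    | zero => simp [P]
    | succ N ih =>
      calc S 0 ≤ P N * S N + ∑ n ∈ range N, P n * b n := ih
        _ ≤ P N * ((1 + a N) * S (N + 1) + b N) + ∑ n ∈ range N, P n * b n := by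
          gcongr; exacts [hP0 N, hS N]
        _ = P (N + 1) * S (N + 1) + ∑ n ∈ range (N + 1), P n * b n := by
          simp only [P, prod_range_succ, sum_range_succ]; ring
  have hbound : ∀ N, S 0 ≤ P N * S N + exp (∑' n, a n) * ∑' n, b n := by
    intro N
    calc S 0 ≤ P N * S N + ∑ n ∈ range N, P n * b n := hunwind N
      _ ≤ P N * S N + ∑ n ∈ range N, exp (∑' n, a n) * b n := by
          gcongr with n; exacts [hb n, hPle n]
      _ ≤ P N * S N + exp (∑' n, a n) * ∑' n, b n := by
          rw [← mul_sum]; gcongr; exact hb'.sum_le_tsum _ fun n _ ↦ hb n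
  have hPS : Tendsto (fun N ↦ P N * S N) atTop (𝓝 0) := by
    refine squeeze_zero_norm (fun N ↦ ?_) (by simpa using hlim.norm.const_mul (exp (∑' n, a n)))
    rw [norm_mul, Real.norm_of_nonneg (hP0 N), Real.norm_eq_abs]
    gcongr
    exact hPle N
  simpa using ge_of_tendsto' (hPS.add_const _) hbound

structure IsControl (T : ℝ) (ω : ℝ → ℝ → ℝ) : Prop where
  continuousOn :
    ContinuousOn (fun q : ℝ × ℝ ↦ ω q.1 q.2) {q : ℝ × ℝ | 0 ≤ q.1 ∧ q.1 ≤ q.2 ∧ q.2 ≤ T}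
  apply_self : ∀ s, 0 ≤ s → s ≤ T → ω s s = 0
  nonneg : ∀ s t, 0 ≤ s → s ≤ t → t ≤ T → 0 ≤ ω s t
  superadditive : ∀ s u t, 0 ≤ s → s ≤ u → u ≤ t → t ≤ T → ω s u + ω u t ≤ ω s t

namespace IsControl

variable {T : ℝ} {ω : ℝ → ℝ → ℝ}

theorem exists_bisection (hω : IsControl T ω) {a b : ℝ} (ha : 0 ≤ a) (hab : a ≤ b)
    (hb : b ≤ T) : ∃ u ∈ Set.Icc a b, ω a u ≤ ω a b / 2 ∧ ω u b ≤ ω a b / 2 := by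
  have hleft : ContinuousOn (fun u ↦ ω a u) (Set.Icc a b) :=
    hω.continuousOn.comp (Continuous.prodMk_right a).continuousOn
      fun u hu ↦ ⟨ha, hu.1, hu.2.trans hb⟩
  have hright : ContinuousOn (fun u ↦ ω u b) (Set.Icc a b) :=
    hω.continuousOn.comp (continuous_id.prodMk continuous_const).continuousOn
      fun u hu ↦ ⟨ha.trans hu.1, hu.2, hb⟩
  have hωab := hω.nonneg a b ha hab hb
  have hzero : (0 : ℝ) ∈ Set.Icc (ω a a - ω a b) (ω a b - ω b b) := by
    rw [hω.apply_self a ha (hab.trans hb), hω.apply_self b (ha.trans hab) hb]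
    constructor <;> linarith
  obtain ⟨u, hu, hbalanced⟩ := intermediate_value_Icc hab (hleft.sub hright) hzero
  have := hω.superadditive a u b ha hu.1 hu.2 hb
  exact ⟨u, hu, by constructor <;> linarith [show ω a u - ω u b = 0 from hbalanced]⟩

theorem sum_le (hω : IsControl T ω) {x : ℕ → ℝ} {m : ℕ} (hx0 : 0 ≤ x 0) (hxm : x m ≤ T)
    (hx : ∀ j < m, x j ≤ x (j + 1)) :
    ∑ j ∈ range m, ω (x j) (x (j + 1)) ≤ ω (x 0) (x m) := by
  induction m with
  | zero => simp [hω.apply_self _ hx0 hxm]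
  | succ m ih =>
    have hmono := monotoneOn_Iic_of_le_succ hx
    have hxm' : x m ≤ x (m + 1) := hx m m.lt_succ_self
    rw [sum_range_succ]
    have := hω.superadditive (x 0) (x m) (x (m + 1)) hx0
      (hmono (by simp) (by simp) (by omega)) hxm' hxm
    linarith [ih (hxm'.trans hxm) fun j hj ↦ hx j (by omega)]

end IsControl

structure IsDyadicPartition (ω : ℝ → ℝ → ℝ) (s t : ℝ) (τ : ℕ → ℕ → ℝ) : Prop where
  apply_zero : ∀ n, τ n 0 = s
  apply_two_pow : ∀ n, τ n (2 ^ n) = t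
  le_succ : ∀ n j, j < 2 ^ n → τ n j ≤ τ n (j + 1)
  succ_two_mul : ∀ n j, j ≤ 2 ^ n → τ (n + 1) (2 * j) = τ n j
  control_le : ∀ n j, j < 2 ^ n → ω (τ n j) (τ n (j + 1)) ≤ (2 : ℝ) ^ (-(n : ℝ)) * ω s t

def bisectionPartition (M : ℝ → ℝ → ℝ) (s t : ℝ) : ℕ → ℕ → ℝ
  | 0, j => if j = 0 then s else t
  | n + 1, j =>
    if j % 2 = 0 then bisectionPartition M s t n (j / 2)
    else M (bisectionPartition M s t n (j / 2)) (bisectionPartition M s t n (j / 2 + 1))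

section bisectionPartition

variable {M : ℝ → ℝ → ℝ} {s t : ℝ}

theorem bisectionPartition_succ_two_mul (n i : ℕ) :
    bisectionPartition M s t (n + 1) (2 * i) = bisectionPartition M s t n i := by
  simp [bisectionPartition]

theorem bisectionPartition_succ_two_mul_add_one (n i : ℕ) :
    bisectionPartition M s t (n + 1) (2 * i + 1) =
      M (bisectionPartition M s t n i) (bisectionPartition M s t n (i + 1)) := by
  simp [bisectionPartition, Nat.add_mod, Nat.add_div]

theorem bisectionPartition_succ_two_mul_add_two (n i : ℕ) :
    bisectionPartition M s t (n + 1) (2 * i + 2) = bisectionPartition M s t n (i + 1) :=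
  bisectionPartition_succ_two_mul n (i + 1)

theorem bisectionPartition_apply_zero (n : ℕ) : bisectionPartition M s t n 0 = s := by
  induction n with
  | zero => rfl
  | succ n ih => simpa using (bisectionPartition_succ_two_mul (M := M) (t := t) n 0).trans ih

theorem bisectionPartition_apply_two_pow (n : ℕ) : bisectionPartition M s t n (2 ^ n) = t := by
  induction n with
  | zero => rfl
  | succ n ih => rw [pow_succ', bisectionPartition_succ_two_mul, ih]

theorem bisectionPartition_mono (hst : s ≤ t)
    (hM : ∀ a b, s ≤ a → a ≤ b → b ≤ t → a ≤ M a b ∧ M a b ≤ b) (n : ℕ) {j : ℕ}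
    (hj : j < 2 ^ n) :
    s ≤ bisectionPartition M s t n j ∧
      bisectionPartition M s t n j ≤ bisectionPartition M s t n (j + 1) ∧
      bisectionPartition M s t n (j + 1) ≤ t := by
  induction n generalizing j with
  | zero =>
    obtain rfl : j = 0 := by simpa using hj
    simp [bisectionPartition, hst]
  | succ n ih =>
    obtain ⟨i, rfl | rfl⟩ := Nat.even_or_odd' j
    · obtain ⟨hs, hab, ht⟩ := ih (j := i) (by omega)
      obtain ⟨ham, hmb⟩ := hM _ _ hs hab ht
      rw [bisectionPartition_succ_two_mul, bisectionPartition_succ_two_mul_add_one]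
      exact ⟨hs, ham, hmb.trans ht⟩
    · obtain ⟨hs, hab, ht⟩ := ih (j := i) (by omega)
      obtain ⟨ham, hmb⟩ := hM _ _ hs hab ht
      rw [bisectionPartition_succ_two_mul_add_one, bisectionPartition_succ_two_mul_add_two]
      exact ⟨hs.trans ham, hmb, ht⟩

theorem isDyadicPartition_bisectionPartition {ω : ℝ → ℝ → ℝ} (hst : s ≤ t)
    (hM : ∀ a b, s ≤ a → a ≤ b → b ≤ t →
      a ≤ M a b ∧ M a b ≤ b ∧ ω a (M a b) ≤ ω a b / 2 ∧ ω (M a b) b ≤ ω a b / 2) :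
    IsDyadicPartition ω s t (bisectionPartition M s t) := by
  have hmono := bisectionPartition_mono hst fun a b ha hab hb ↦
    (hM a b ha hab hb).imp_right And.left
  refine ⟨bisectionPartition_apply_zero, bisectionPartition_apply_two_pow,
    fun n j hj ↦ (hmono n hj).2.1, fun n j _ ↦ bisectionPartition_succ_two_mul n j, ?_⟩
  intro n j hj
  induction n generalizing j with
  | zero =>
    obtain rfl : j = 0 := by simpa using hj
    simp [bisectionPartition]
  | succ n ih =>
    have hhalf : (2 : ℝ) ^ (-((n + 1 : ℕ) : ℝ)) = (2 : ℝ) ^ (-(n : ℝ)) / 2 := by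
      rw [Nat.cast_succ, neg_add, rpow_add two_pos, rpow_neg_one]; ring
    rw [hhalf, div_mul_eq_mul_div]
    obtain ⟨i, rfl | rfl⟩ := Nat.even_or_odd' j
    · obtain ⟨hs, hab, ht⟩ := hmono n (j := i) (by omega)
      rw [bisectionPartition_succ_two_mul, bisectionPartition_succ_two_mul_add_one]
      linarith [(hM _ _ hs hab ht).2.2.1, ih i (by omega)]
    · obtain ⟨hs, hab, ht⟩ := hmono n (j := i) (by omega)
      rw [bisectionPartition_succ_two_mul_add_one, bisectionPartition_succ_two_mul_add_two]
      linarith [(hM _ _ hs hab ht).2.2.2, ih i (by omega)]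

end bisectionPartition

theorem IsControl.exists_isDyadicPartition {T : ℝ} {ω : ℝ → ℝ → ℝ} (hω : IsControl T ω)
    {s t : ℝ} (hs : 0 ≤ s) (hst : s ≤ t) (ht : t ≤ T) : ∃ τ, IsDyadicPartition ω s t τ := by
  have hbisect : ∀ a b, ∃ u, s ≤ a → a ≤ b → b ≤ t →
      a ≤ u ∧ u ≤ b ∧ ω a u ≤ ω a b / 2 ∧ ω u b ≤ ω a b / 2 := by
    intro a b
    by_cases h : s ≤ a ∧ a ≤ b ∧ b ≤ t
    · obtain ⟨u, hu, hau, hub⟩ := hω.exists_bisection (hs.trans h.1) h.2.1 (h.2.2.trans ht)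
      exact ⟨u, fun _ _ _ ↦ ⟨hu.1, hu.2, hau, hub⟩⟩
    · exact ⟨a, fun has hab hbt ↦ absurd ⟨has, hab, hbt⟩ h⟩
  choose M hM using hbisect
  exact ⟨_, isDyadicPartition_bisectionPartition hst hM⟩

theorem rpow_sub_one_mul_self {x β : ℝ} (hx : 0 ≤ x) (hβ : β ≠ 0) : x ^ (β - 1) * x = x ^ β := by
  rw [← rpow_add_one' hx (by simpa using hβ), sub_add_cancel]

theorem rpow_le_two_rpow_neg_pow_mul_rpow {x w r : ℝ} (n : ℕ) (hx : 0 ≤ x)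
    (hxw : x ≤ (2 : ℝ) ^ (-(n : ℝ)) * w) (hr : 0 ≤ r) :
    x ^ r ≤ ((2 : ℝ) ^ (-r)) ^ n * w ^ r := by
  have hw : 0 ≤ w := (mul_nonneg_iff_of_pos_left (rpow_pos_of_pos two_pos _)).1 (hx.trans hxw)
  calc x ^ r ≤ ((2 : ℝ) ^ (-(n : ℝ)) * w) ^ r := rpow_le_rpow hx hxw hr
    _ = ((2 : ℝ) ^ (-r)) ^ n * w ^ r := by
      rw [mul_rpow (by positivity) hw, ← rpow_mul two_pos.le, ← rpow_natCast,
        ← rpow_mul two_pos.le, neg_mul_comm, mul_comm (n : ℝ)]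

theorem rpow_le_two_rpow_pow_mul_rpow_mul {x w β : ℝ} (n : ℕ) (hx : 0 ≤ x)
    (hxw : x ≤ (2 : ℝ) ^ (-(n : ℝ)) * w) (hβ : 1 ≤ β) :
    x ^ β ≤ ((2 : ℝ) ^ (1 - β)) ^ n * w ^ (β - 1) * x := by
  calc x ^ β = x ^ (β - 1) * x := (rpow_sub_one_mul_self hx (by linarith)).symm
    _ ≤ ((2 : ℝ) ^ (-(β - 1))) ^ n * w ^ (β - 1) * x := by
        gcongr; exact rpow_le_two_rpow_neg_pow_mul_rpow n hx hxw (by linarith)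
    _ = ((2 : ℝ) ^ (1 - β)) ^ n * w ^ (β - 1) * x := by rw [neg_sub]

def partitionSum {U : Type*} [NormedAddCommGroup U] (Γ : ℝ → ℝ → U) (τ : ℕ → ℕ → ℝ) (n : ℕ) :
    ℝ :=
  ∑ j ∈ range (2 ^ n), ‖Γ (τ n j) (τ n (j + 1))‖

noncomputable def sewingConstant (α β C : ℝ) : ℝ :=
  exp (C * (1 - (2 : ℝ) ^ (-α))⁻¹) * (C * (1 - (2 : ℝ) ^ (1 - β))⁻¹)

theorem sewingConstant_nonneg {α β C : ℝ} (hC : 0 ≤ C) (hβ : 1 ≤ β) :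
    0 ≤ sewingConstant α β C := by
  have : (2 : ℝ) ^ (1 - β) ≤ 1 := rpow_le_one_of_one_le_of_nonpos one_le_two (by linarith)
  exact mul_nonneg (exp_pos _).le (mul_nonneg hC (inv_nonneg.2 (by linarith)))

namespace IsDyadicPartition

variable {U : Type*} [NormedAddCommGroup U] {T α β C s t : ℝ} {ω : ℝ → ℝ → ℝ}
  {Γ : ℝ → ℝ → U} {τ : ℕ → ℕ → ℝ}

theorem mem_Icc (h : IsDyadicPartition ω s t τ) {n j : ℕ} (hj : j ≤ 2 ^ n) :
    τ n j ∈ Set.Icc s t := by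
  have hmono := monotoneOn_Iic_of_le_succ (h.le_succ n)
  rw [← h.apply_zero n, ← h.apply_two_pow n]
  exact ⟨hmono (by simp) hj (Nat.zero_le _), hmono hj (by simp) hj⟩

theorem le (h : IsDyadicPartition ω s t τ) : s ≤ t :=
  (h.mem_Icc (n := 0) (j := 0) (by simp)).1.trans (h.mem_Icc (n := 0) (j := 0) (by simp)).2

theorem succ_two_mul_add_one_mem_Icc (h : IsDyadicPartition ω s t τ) {n i : ℕ}
    (hi : i < 2 ^ n) : τ (n + 1) (2 * i + 1) ∈ Set.Icc (τ n i) (τ n (i + 1)) := by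
  have h2 : 2 * i + 1 < 2 ^ (n + 1) := by rw [pow_succ]; omega
  constructor
  · rw [← h.succ_two_mul n i hi.le]
    exact h.le_succ _ _ (by omega)
  · rw [← h.succ_two_mul n (i + 1) hi, show 2 * (i + 1) = 2 * i + 1 + 1 by ring]
    exact h.le_succ _ _ h2

theorem partitionSum_zero (h : IsDyadicPartition ω s t τ) (Γ : ℝ → ℝ → U) :
    partitionSum Γ τ 0 = ‖Γ s t‖ := by
  simp [partitionSum, h.apply_zero, ← h.apply_two_pow 0]

theorem partitionSum_succ (h : IsDyadicPartition ω s t τ) (Γ : ℝ → ℝ → U) (n : ℕ) :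
    partitionSum Γ τ (n + 1) = ∑ i ∈ range (2 ^ n),
      (‖Γ (τ n i) (τ (n + 1) (2 * i + 1))‖ + ‖Γ (τ (n + 1) (2 * i + 1)) (τ n (i + 1))‖) := by
  rw [partitionSum, pow_succ', sum_range_two_mul]
  refine sum_congr rfl fun i hi ↦ ?_
  rw [mem_range] at hi
  rw [h.succ_two_mul n i hi.le, show 2 * i + 1 + 1 = 2 * (i + 1) by ring,
    h.succ_two_mul n (i + 1) hi]

theorem partitionSum_le_succ (h : IsDyadicPartition ω s t τ) (hω : IsControl T ω) (hs : 0 ≤ s)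
    (ht : t ≤ T) (hω1 : ω s t ≤ 1) (hC : 0 ≤ C) (hα : 0 ≤ α) (hβ : 1 ≤ β)
    (hΓ : ∀ a u b, 0 ≤ a → a ≤ u → u ≤ b → b ≤ T →
      ‖Γ a b‖ ≤ (1 + C * ω a b ^ α) * (‖Γ a u‖ + ‖Γ u b‖) + C * ω a b ^ β) (n : ℕ) :
    partitionSum Γ τ n ≤
      (1 + C * ((2 : ℝ) ^ (-α)) ^ n) * partitionSum Γ τ (n + 1)
        + C * ω s t ^ β * ((2 : ℝ) ^ (1 - β)) ^ n := by
  set w := ω s t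
  have hw : 0 ≤ w := hω.nonneg s t hs h.le ht
  have hterm : ∀ i ∈ range (2 ^ n), ‖Γ (τ n i) (τ n (i + 1))‖ ≤
      (1 + C * ((2 : ℝ) ^ (-α)) ^ n) *
          (‖Γ (τ n i) (τ (n + 1) (2 * i + 1))‖ + ‖Γ (τ (n + 1) (2 * i + 1)) (τ n (i + 1))‖)
        + C * w ^ (β - 1) * ((2 : ℝ) ^ (1 - β)) ^ n * ω (τ n i) (τ n (i + 1)) := by
    intro i hi
    rw [mem_range] at hi
    have ha := hs.trans (h.mem_Icc hi.le).1
    have hb := (h.mem_Icc (Nat.succ_le_of_lt hi)).2.trans ht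
    have hx := hω.nonneg _ _ ha (h.le_succ n i hi) hb
    have hxw := h.control_le n i hi
    have hsmall : ω (τ n i) (τ n (i + 1)) ^ α ≤ ((2 : ℝ) ^ (-α)) ^ n :=
      (rpow_le_two_rpow_neg_pow_mul_rpow n hx hxw hα).trans
        (mul_le_of_le_one_right (by positivity) (rpow_le_one hw hω1 hα))
    have hmid := h.succ_two_mul_add_one_mem_Icc hi
    calc _ ≤ _ := hΓ _ _ _ ha hmid.1 hmid.2 hb
      _ ≤ (1 + C * ((2 : ℝ) ^ (-α)) ^ n) *
            (‖Γ (τ n i) (τ (n + 1) (2 * i + 1))‖ + ‖Γ (τ (n + 1) (2 * i + 1)) (τ n (i + 1))‖)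
          + C * (((2 : ℝ) ^ (1 - β)) ^ n * w ^ (β - 1) * ω (τ n i) (τ n (i + 1))) := by
        gcongr
        exact rpow_le_two_rpow_pow_mul_rpow_mul n hx hxw hβ
      _ = _ := by ring
  have hcontrol : ∑ i ∈ range (2 ^ n), ω (τ n i) (τ n (i + 1)) ≤ w := by
    have := hω.sum_le (x := τ n) (m := 2 ^ n) (by rw [h.apply_zero]; exact hs)
      (by rw [h.apply_two_pow]; exact ht) (h.le_succ n)
    rwa [h.apply_zero, h.apply_two_pow] at this
  calc partitionSum Γ τ n ≤ _ := sum_le_sum hterm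
    _ = (1 + C * ((2 : ℝ) ^ (-α)) ^ n) * partitionSum Γ τ (n + 1)
          + C * w ^ (β - 1) * ((2 : ℝ) ^ (1 - β)) ^ n
            * ∑ i ∈ range (2 ^ n), ω (τ n i) (τ n (i + 1)) := by
      rw [h.partitionSum_succ, sum_add_distrib, mul_sum, mul_sum]
    _ ≤ (1 + C * ((2 : ℝ) ^ (-α)) ^ n) * partitionSum Γ τ (n + 1)
          + C * w ^ (β - 1) * ((2 : ℝ) ^ (1 - β)) ^ n * w := by gcongr
    _ = _ := by
      rw [← rpow_sub_one_mul_self (β := β) hw (by linarith)]; ring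

theorem norm_le (h : IsDyadicPartition ω s t τ) (hω : IsControl T ω) (hs : 0 ≤ s)
    (ht : t ≤ T) (hω1 : ω s t ≤ 1) (hC : 0 ≤ C) (hα : 0 < α) (hβ : 1 < β)
    (hΓ : ∀ a u b, 0 ≤ a → a ≤ u → u ≤ b → b ≤ T →
      ‖Γ a b‖ ≤ (1 + C * ω a b ^ α) * (‖Γ a u‖ + ‖Γ u b‖) + C * ω a b ^ β)
    (hlim : Tendsto (partitionSum Γ τ) atTop (𝓝 0)) :
    ‖Γ s t‖ ≤ sewingConstant α β C * ω s t ^ β := by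
  have hq₁ : (2 : ℝ) ^ (-α) < 1 := rpow_lt_one_of_one_lt_of_neg one_lt_two (by linarith)
  have hq₂ : (2 : ℝ) ^ (1 - β) < 1 := rpow_lt_one_of_one_lt_of_neg one_lt_two (by linarith)
  have hCw : 0 ≤ C * ω s t ^ β := mul_nonneg hC (rpow_nonneg (hω.nonneg s t hs h.le ht) β)
  have := discrete_gronwall_backward (fun n ↦ by positivity) (fun n ↦ by positivity)
    ((summable_geometric_of_lt_one (by positivity) hq₁).mul_left C)
    ((summable_geometric_of_lt_one (by positivity) hq₂).mul_left _)
    (h.partitionSum_le_succ hω hs ht hω1 hC hα.le hβ.le hΓ) hlim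
  rw [h.partitionSum_zero, tsum_mul_left, tsum_mul_left, tsum_geometric_of_lt_one
    (by positivity) hq₁, tsum_geometric_of_lt_one (by positivity) hq₂] at this
  exact this.trans_eq (by rw [sewingConstant]; ring)

end IsDyadicPartition

/-- Abstract dyadic-subdivision estimate.  Let `p ≥ 1`, `γ > p − 1`, `C ≥ 0`.
Suppose `Γ : {0 ≤ s ≤ t ≤ T} → U` takes values in a Banach space `U` and `ω` is a continuous,
nonnegative, vanishing-on-the-diagonal, superadditive control on `[0,T]` with `ω ≤ 1`,
such that
(i) `‖Γ_{s,t}‖ ≤ (1 + C ω(s,t)^{1/p})(‖Γ_{s,u}‖ + ‖Γ_{u,t}‖) + C ω(s,t)^{(γ+1)/p}`, and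
(ii) along every nested dyadic-type family of partitions `{t_j^n}` of `[s,t]` with
`ω(t_j^n, t_{j+1}^n) ≤ 2^{−n} ω(s,t)` the sums `∑_j ‖Γ_{t_j^n, t_{j+1}^n}‖` tend to `0`.
Then there is a constant `C'` depending only on `p`, `γ`, `C` with
`‖Γ_{s,t}‖ ≤ C' ω(s,t)^{(γ+1)/p}`. -/
theorem dyadic_subdivision_estimate (p γ C : ℝ) (hp : 1 ≤ p) (hγ : p - 1 < γ) (hC : 0 ≤ C) :
    ∃ C' : ℝ, 0 ≤ C' ∧
      ∀ (U : Type) [NormedAddCommGroup U] [NormedSpace ℝ U] [CompleteSpace U],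
      ∀ (T : ℝ), 0 ≤ T →
      ∀ (Γ : ℝ → ℝ → U) (ω : ℝ → ℝ → ℝ),
        ContinuousOn (fun q : ℝ × ℝ => ω q.1 q.2)
          {q : ℝ × ℝ | 0 ≤ q.1 ∧ q.1 ≤ q.2 ∧ q.2 ≤ T} →
        (∀ s, 0 ≤ s → s ≤ T → ω s s = 0) →
        (∀ s t, 0 ≤ s → s ≤ t → t ≤ T → 0 ≤ ω s t) →
        (∀ s t, 0 ≤ s → s ≤ t → t ≤ T → ω s t ≤ 1) →
        (∀ s u t, 0 ≤ s → s ≤ u → u ≤ t → t ≤ T → ω s u + ω u t ≤ ω s t) →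
        -- (i)
        (∀ s u t, 0 ≤ s → s ≤ u → u ≤ t → t ≤ T →
          ‖Γ s t‖ ≤ (1 + C * ω s t ^ (1 / p)) * (‖Γ s u‖ + ‖Γ u t‖)
            + C * ω s t ^ ((γ + 1) / p)) →
        -- (ii)
        (∀ s t, 0 ≤ s → s ≤ t → t ≤ T →
          ∀ tt : ℕ → ℕ → ℝ,
            (∀ n, tt n 0 = s) →
            (∀ n, tt n (2 ^ n) = t) →
            (∀ n j, j < 2 ^ n → tt n j ≤ tt n (j + 1)) →
            (∀ n j, j ≤ 2 ^ n → tt (n + 1) (2 * j) = tt n j) →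
            (∀ n j, j < 2 ^ n → ω (tt n j) (tt n (j + 1)) ≤ (2 : ℝ) ^ (-(n : ℝ)) * ω s t) →
            Tendsto (fun n => ∑ j ∈ Finset.range (2 ^ n), ‖Γ (tt n j) (tt n (j + 1))‖)
              atTop (nhds 0)) →
        ∀ s t, 0 ≤ s → s ≤ t → t ≤ T →
          ‖Γ s t‖ ≤ C' * ω s t ^ ((γ + 1) / p) := by
  have hp₀ : 0 < p := one_pos.trans_le hp
  have hβ : 1 < (γ + 1) / p := (one_lt_div hp₀).2 (by linarith)
  refine ⟨sewingConstant (1 / p) ((γ + 1) / p) C, sewingConstant_nonneg hC hβ.le, ?_⟩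
  intro U _ _ _ T _ Γ ω hcont hdiag hnonneg hle_one hsuper hsplit hdyadic s t hs hst ht
  have hω : IsControl T ω := ⟨hcont, hdiag, hnonneg, hsuper⟩
  obtain ⟨τ, hτ⟩ := hω.exists_isDyadicPartition hs hst ht
  exact hτ.norm_le hω hs ht (hle_one s t hs hst ht) hC (by positivity) hβ hsplit
    (hdyadic s t hs hst ht τ hτ.apply_zero hτ.apply_two_pow hτ.le_succ hτ.succ_two_mul
      hτ.control_le)
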